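/- For every ordinal ξ with 1 ≤ ξ < ω₁: (S_ξ[A_2])[A_3] ⊆ (S_ξ)³. -/

import Mathlib

noncomputable section

open scoped Classical

/-- The first uncountable ordinal. -/
def omegaOne : Ordinal := (Cardinal.aleph 1).ord

/-- `A < B` for finite sets of naturals: every element of `A` is smaller than every
element of `B` (i.e. `max A < min B`, with the conventions `∅ < B` and `A < ∅`). -/
def finLT (A B : Finset ℕ) : Prop := ∀ a ∈ A, ∀ b ∈ B, a < b

/-- `n ≤ A`, i.e. `n ≤ min A` (with `min ∅ = ∞`). -/
def finLE (n : ℕ) (A : Finset ℕ) : Prop := ∀ a ∈ A, n ≤ a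

/-- The successor step in the definition of the Schreier families:
unions `E_1 ∪ ⋯ ∪ E_n` with `n ≤ E_1 < E_2 < ⋯ < E_n` and each `E_i` a nonempty member
of `F` (the empty set arises from `n = 0`). -/
def succStep (F : Set (Finset ℕ)) : Set (Finset ℕ) :=
  {A | ∃ (n : ℕ) (E : Fin n → Finset ℕ),
        (∀ i, E i ∈ F) ∧ (∀ i, (E i).Nonempty) ∧
        (∀ i j : Fin n, i < j → finLT (E i) (E j)) ∧
        (∀ i, finLE n (E i)) ∧ A = Finset.univ.biUnion E}

/-- A system of Schreier families `S ξ` for `ξ < ω₁`, together with the chosen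
`ξ`-approximating sequences `α ξ ·` (indexed by `n ≥ 1`) for limit ordinals `ξ < ω₁`,
satisfying the standing assumptions:  each `α ξ n` is a successor ordinal in `[1, ξ)`,
the sequence strictly increases to `ξ`, `α ξ 1 = 1`, and whenever
`A, B ∈ S (α ξ n)` with `1 < A < B` then `A ∪ B ∈ S (α ξ (n+1))`. -/
structure SchreierSystem where
  α : Ordinal → ℕ → Ordinal
  S : Ordinal → Set (Finset ℕ)
  S_zero : S 0 = {A : Finset ℕ | A = ∅ ∨ ∃ n : ℕ, A = {n}}
  S_succ : ∀ γ : Ordinal, S (γ + 1) = succStep (S γ)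
  S_limit : ∀ ξ : Ordinal, Order.IsSuccLimit ξ → ξ < omegaOne →
    S ξ = {E : Finset ℕ | ∃ n : ℕ, 1 ≤ n ∧ finLE n E ∧ E ∈ S (α ξ n)}
  α_pos : ∀ ξ : Ordinal, Order.IsSuccLimit ξ → ξ < omegaOne → ∀ n : ℕ, 1 ≤ n → 1 ≤ α ξ n
  α_lt : ∀ ξ : Ordinal, Order.IsSuccLimit ξ → ξ < omegaOne → ∀ n : ℕ, 1 ≤ n → α ξ n < ξ
  α_succOrd : ∀ ξ : Ordinal, Order.IsSuccLimit ξ → ξ < omegaOne → ∀ n : ℕ, 1 ≤ n →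
    ∃ β : Ordinal, α ξ n = β + 1
  α_mono : ∀ ξ : Ordinal, Order.IsSuccLimit ξ → ξ < omegaOne → ∀ n : ℕ, 1 ≤ n → α ξ n < α ξ (n + 1)
  α_tendsto : ∀ ξ : Ordinal, Order.IsSuccLimit ξ → ξ < omegaOne → ∀ β : Ordinal, β < ξ →
    ∃ n : ℕ, 1 ≤ n ∧ β < α ξ n
  α_one : ∀ ξ : Ordinal, Order.IsSuccLimit ξ → ξ < omegaOne → α ξ 1 = 1
  α_union : ∀ ξ : Ordinal, Order.IsSuccLimit ξ → ξ < omegaOne → ∀ n : ℕ, 1 ≤ n →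
    ∀ A B : Finset ℕ, A ∈ S (α ξ n) → B ∈ S (α ξ n) → finLE 2 A → finLT A B →
      A ∪ B ∈ S (α ξ (n + 1))

/-- `A` is a maximal element of the family `F` (with respect to inclusion). -/
def MaxIn (F : Set (Finset ℕ)) (A : Finset ℕ) : Prop :=
  A ∈ F ∧ ∀ B ∈ F, A ⊆ B → B = A

/-- The minimum of a finite set of naturals (`0` if the set is empty; it is only ever
used for nonempty sets). -/
def sMin (A : Finset ℕ) : ℕ := sInf (A : Set ℕ)

/-- The composition `M[N]` of two families of finite subsets of `ℕ`:
all unions `F_1 ∪ ⋯ ∪ F_k` with `F_i ∈ N` nonempty, `F_1 < F_2 < ⋯ < F_k` and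
`{min F_i : i = 1, …, k} ∈ M`. -/
def famComp (M N : Set (Finset ℕ)) : Set (Finset ℕ) :=
  {A | ∃ (k : ℕ) (F : Fin k → Finset ℕ),
        (∀ i, F i ∈ N) ∧ (∀ i, (F i).Nonempty) ∧
        (∀ i j : Fin k, i < j → finLT (F i) (F j)) ∧
        (Finset.univ.image fun i => sMin (F i)) ∈ M ∧
        A = Finset.univ.biUnion F}

/-- `(M)³ = {M₁ ∪ M₂ ∪ M₃ : M₁ < M₂ < M₃, each Mᵢ ∈ M}`. -/
def famThree (M : Set (Finset ℕ)) : Set (Finset ℕ) :=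
  {A | ∃ M1 M2 M3 : Finset ℕ, M1 ∈ M ∧ M2 ∈ M ∧ M3 ∈ M ∧
        finLT M1 M2 ∧ finLT M2 M3 ∧ A = M1 ∪ M2 ∪ M3}

/-- `A_n = {E ⊆ ℕ : |E| ≤ n}`. -/
def Acard (n : ℕ) : Set (Finset ℕ) := {E : Finset ℕ | E.card ≤ n}

/-!
Composition of families is associative, `A₂[A₃] ⊆ A₆`, and `S_{γ+1} = 𝒮₁[S_γ]` for the family `𝒮₁`
of Schreier sets `|E| ≤ min E`; so it suffices to show `S_ξ[A₆] ⊆ A₃[S_ξ]` by induction on `ξ`.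
At a successor, `S_{γ+1}[A₆] = 𝒮₁[S_γ[A₆]] ⊆ 𝒮₁[A₆[S_γ]] = 𝒮₁[A₆][S_γ]`. A set `E ∈ 𝒮₁[A₆]` has
at most `6 min E` elements, so cutting it after its first `min E` and `3 min E` elements writes it
as three successive Schreier sets: `𝒮₁[A₆] ⊆ A₃[𝒮₁]`, and associativity gives
`A₃[𝒮₁][S_γ] = A₃[S_{γ+1}]`. At a limit `ξ`, a set of `S_ξ[A₆]` lies in `S_{α(ξ,n)}[A₆]` and above
`n`, so the three pieces given by the induction hypothesis lie in `S_ξ`.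
-/

namespace Schreier

open Finset

lemma sMin_mem {A : Finset ℕ} (h : A.Nonempty) : sMin A ∈ A :=
  Nat.sInf_mem (s := (A : Set ℕ)) (by exact_mod_cast h)

lemma sMin_le {A : Finset ℕ} {a : ℕ} (h : a ∈ A) : sMin A ≤ a :=
  Nat.sInf_le (by exact_mod_cast h)

lemma sMin_singleton (a : ℕ) : sMin {a} = a := by
  simp [sMin]

lemma finLT.sMin_lt {A B : Finset ℕ} (h : finLT A B) (hA : A.Nonempty) (hB : B.Nonempty) :
    sMin A < sMin B :=
  h _ (sMin_mem hA) _ (sMin_mem hB)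

lemma finLT.mono {A A' B B' : Finset ℕ} (h : finLT A B) (hA : A' ⊆ A) (hB : B' ⊆ B) :
    finLT A' B' :=
  fun a ha b hb => h a (hA ha) b (hB hb)

lemma finLE_add_card_of_finLT {m : ℕ} {Y Z : Finset ℕ} (hY : finLE m Y) (hZ : finLE m Z)
    (h : finLT Y Z) : finLE (m + #Y) Z := by
  intro z hz
  have hYz : #Y ≤ #(Ico m z) := card_le_card fun y hy => mem_Ico.2 ⟨hY y hy, h y hy z hz⟩
  have := hZ z hz
  rw [Nat.card_Ico] at hYz
  omega

/-- The blocks `F₁ < ⋯ < F_k` of the definition of `M[N]`, as a finset of sets rather than an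
enumeration. -/
structure IsBlockFamily (𝓕 : Finset (Finset ℕ)) : Prop where
  nonempty : ∀ F ∈ 𝓕, F.Nonempty
  comparable : (𝓕 : Set (Finset ℕ)).Pairwise fun F G => finLT F G ∨ finLT G F

namespace IsBlockFamily

variable {𝓕 𝓖 : Finset (Finset ℕ)}

lemma mono (h : IsBlockFamily 𝓕) (h𝓖 : 𝓖 ⊆ 𝓕) : IsBlockFamily 𝓖 :=
  ⟨fun F hF => h.nonempty F (h𝓖 hF), h.comparable.mono (by exact_mod_cast h𝓖)⟩

lemma finLT_of_sMin_lt (h : IsBlockFamily 𝓕) {F G : Finset ℕ} (hF : F ∈ 𝓕) (hG : G ∈ 𝓕)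
    (hlt : sMin F < sMin G) : finLT F G := by
  rcases h.comparable hF hG (by rintro rfl; exact lt_irrefl _ hlt) with hFG | hGF
  · exact hFG
  · exact absurd (finLT.sMin_lt hGF (h.nonempty G hG) (h.nonempty F hF)) hlt.not_gt

lemma injOn_sMin (h : IsBlockFamily 𝓕) : Set.InjOn sMin 𝓕 := by
  intro F hF G hG hFG
  by_contra hne
  rcases h.comparable hF hG hne with hlt | hlt
  · exact (finLT.sMin_lt hlt (h.nonempty F hF) (h.nonempty G hG)).ne hFG
  · exact (finLT.sMin_lt hlt (h.nonempty G hG) (h.nonempty F hF)).ne hFG.symm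

lemma card_image_sMin (h : IsBlockFamily 𝓕) : #(𝓕.image sMin) = #𝓕 :=
  card_image_of_injOn h.injOn_sMin

lemma sMin_biUnion (h : IsBlockFamily 𝓕) : sMin (𝓕.biUnion id) = sMin (𝓕.image sMin) := by
  rcases 𝓕.eq_empty_or_nonempty with rfl | h𝓕
  · rfl
  obtain ⟨F, hF, hFmin⟩ := mem_image.1 (sMin_mem (h𝓕.image sMin))
  obtain ⟨G, hG, hmin⟩ := mem_biUnion.1 (sMin_mem (h𝓕.biUnion h.nonempty))
  refine le_antisymm ?_ ?_
  · rw [← hFmin]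
    exact sMin_le (mem_biUnion.2 ⟨F, hF, sMin_mem (h.nonempty F hF)⟩)
  · exact (sMin_le (mem_image_of_mem sMin hG)).trans (sMin_le hmin)

lemma exists_sorted_list (h : IsBlockFamily 𝓕) :
    ∃ l : List (Finset ℕ), l.Pairwise finLT ∧ l.toFinset = 𝓕 := by
  induction 𝓕 using Finset.induction_on_min_value sMin with
  | empty => exact ⟨[], List.Pairwise.nil, rfl⟩
  | insert F 𝓕 hF hmin ih =>
    obtain ⟨l, hl, rfl⟩ := ih (h.mono (subset_insert F _))
    refine ⟨F :: l, List.pairwise_cons.2 ⟨fun G hG => ?_, hl⟩, List.toFinset_cons⟩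
    have hGl : G ∈ l.toFinset := List.mem_toFinset.2 hG
    have hG' : G ∈ insert F l.toFinset := mem_insert_of_mem hGl
    refine h.finLT_of_sMin_lt (mem_insert_self F _) hG' ((hmin G hGl).lt_of_ne fun hFG => ?_)
    exact hF (h.injOn_sMin (mem_insert_self F _) hG' hFG ▸ hGl)

end IsBlockFamily

lemma isBlockFamily_toFinset {l : List (Finset ℕ)} (hl : l.Pairwise finLT)
    (hne : ∀ F ∈ l, F.Nonempty) : IsBlockFamily l.toFinset := by
  refine ⟨fun F hF => hne F (List.mem_toFinset.1 hF), fun F hF G hG hFG => ?_⟩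
  simp only [List.coe_toFinset, Set.mem_ofPred_eq] at hF hG
  induction l with
  | nil => simp at hF
  | cons a l ih =>
    rw [List.pairwise_cons] at hl
    rcases List.mem_cons.1 hF with rfl | hFl <;> rcases List.mem_cons.1 hG with rfl | hGl
    · exact absurd rfl hFG
    · exact Or.inl (hl.1 G hGl)
    · exact Or.inr (hl.1 F hFl)
    · exact ih hl.2 (fun F hF => hne F (List.mem_cons_of_mem a hF)) hFl hGl

lemma mem_famComp_iff {M N : Set (Finset ℕ)} {A : Finset ℕ} :
    A ∈ famComp M N ↔ ∃ 𝓕 : Finset (Finset ℕ), IsBlockFamily 𝓕 ∧ (∀ F ∈ 𝓕, F ∈ N) ∧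
      𝓕.image sMin ∈ M ∧ A = 𝓕.biUnion id := by
  constructor
  · rintro ⟨k, F, hN, hne, hlt, hM, rfl⟩
    refine ⟨univ.image F, ⟨?_, ?_⟩, ?_, ?_, ?_⟩
    · simpa using hne
    · simp only [coe_image, coe_univ, Set.image_univ]
      rintro _ ⟨i, rfl⟩ _ ⟨j, rfl⟩ hij
      rcases lt_or_gt_of_ne (ne_of_apply_ne F hij) with h | h
      · exact Or.inl (hlt i j h)
      · exact Or.inr (hlt j i h)
    · simpa using hN
    · rwa [image_image]
    · rw [image_biUnion]; rfl
  · rintro ⟨𝓕, h𝓕, hN, hM, rfl⟩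
    obtain ⟨l, hl, rfl⟩ := h𝓕.exists_sorted_list
    refine ⟨l.length, l.get, fun i => hN _ (List.mem_toFinset.2 (l.get_mem i)),
      fun i => h𝓕.nonempty _ (List.mem_toFinset.2 (l.get_mem i)),
      fun i j hij => List.pairwise_iff_get.1 hl i j hij, ?_, ?_⟩
    · convert hM using 1
      ext x
      simp [List.mem_iff_getElem]
    · ext x
      simp [List.mem_iff_get]

lemma famComp_mono_left {M M' N : Set (Finset ℕ)} (h : M ⊆ M') : famComp M N ⊆ famComp M' N :=
  fun _ ⟨k, F, hN, hne, hlt, hM, hA⟩ => ⟨k, F, hN, hne, hlt, h hM, hA⟩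

lemma mem_famComp_of_forall_subset {M N N' : Set (Finset ℕ)} {A : Finset ℕ}
    (hA : A ∈ famComp M N) (h : ∀ F ∈ N, F ⊆ A → F ∈ N') : A ∈ famComp M N' := by
  obtain ⟨k, F, hN, hne, hlt, hM, rfl⟩ := hA
  exact ⟨k, F, fun i => h _ (hN i) (subset_biUnion_of_mem F (mem_univ i)), hne, hlt, hM, rfl⟩

lemma famComp_mono_right {M N N' : Set (Finset ℕ)} (h : N ⊆ N') : famComp M N ⊆ famComp M N' :=
  fun _ hA => mem_famComp_of_forall_subset hA fun _ hF _ => h hF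

lemma finLE_biUnion_of_finLE_image_sMin {n : ℕ} {𝓕 : Finset (Finset ℕ)}
    (h : finLE n (𝓕.image sMin)) : finLE n (𝓕.biUnion id) := by
  intro a ha
  obtain ⟨F, hF, haF⟩ := mem_biUnion.1 ha
  exact (h _ (mem_image_of_mem sMin hF)).trans (sMin_le haF)

def blockUnion (𝓕 : Finset (Finset ℕ)) (G : Finset ℕ) : Finset ℕ :=
  (𝓕.filter fun F => sMin F ∈ G).biUnion id

section blockUnion

variable {𝓕 : Finset (Finset ℕ)} {G G' : Finset ℕ}

lemma image_sMin_filter (hG : G ⊆ 𝓕.image sMin) :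
    (𝓕.filter fun F => sMin F ∈ G).image sMin = G := by
  rw [← filter_image (p := (· ∈ G)), filter_mem_eq_inter, inter_eq_right.2 hG]

lemma blockUnion_mem_famComp {M N : Set (Finset ℕ)} (h : IsBlockFamily 𝓕)
    (hN : ∀ F ∈ 𝓕, F ∈ N) (hG : G ⊆ 𝓕.image sMin) (hGM : G ∈ M) :
    blockUnion 𝓕 G ∈ famComp M N :=
  mem_famComp_iff.2 ⟨_, h.mono (filter_subset _ _), fun F hF => hN F (mem_filter.1 hF).1,
    (image_sMin_filter hG).symm ▸ hGM, rfl⟩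

lemma sMin_blockUnion (h : IsBlockFamily 𝓕) (hG : G ⊆ 𝓕.image sMin) :
    sMin (blockUnion 𝓕 G) = sMin G := by
  rw [blockUnion, (h.mono (filter_subset _ _)).sMin_biUnion, image_sMin_filter hG]

lemma blockUnion_nonempty (h : IsBlockFamily 𝓕) (hG : G ⊆ 𝓕.image sMin) (hne : G.Nonempty) :
    (blockUnion 𝓕 G).Nonempty := by
  obtain ⟨F, hF, hFG⟩ := mem_image.1 (hG (sMin_mem hne))
  exact (h.nonempty F hF).mono
    (subset_biUnion_of_mem id (mem_filter.2 ⟨hF, hFG ▸ sMin_mem hne⟩))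

lemma finLT_blockUnion (h : IsBlockFamily 𝓕) (hGG' : finLT G G') :
    finLT (blockUnion 𝓕 G) (blockUnion 𝓕 G') := by
  intro a ha b hb
  obtain ⟨F, hF, haF⟩ := mem_biUnion.1 ha
  obtain ⟨F', hF', hbF'⟩ := mem_biUnion.1 hb
  rw [mem_filter] at hF hF'
  exact h.finLT_of_sMin_lt hF.1 hF'.1 (hGG' _ hF.2 _ hF'.2) a haF b hbF'

lemma biUnion_blockUnion (𝒢 : Finset (Finset ℕ)) :
    𝒢.biUnion (blockUnion 𝓕) = blockUnion 𝓕 (𝒢.biUnion id) := by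
  ext a
  simp only [blockUnion, mem_biUnion, mem_filter, id]
  grind

lemma blockUnion_image_sMin : blockUnion 𝓕 (𝓕.image sMin) = 𝓕.biUnion id := by
  rw [blockUnion, filter_true_of_mem fun F hF => mem_image_of_mem sMin hF]

end blockUnion

lemma IsBlockFamily.image {ℋ : Finset (Finset ℕ)} {g : Finset ℕ → Finset ℕ}
    (h : IsBlockFamily ℋ) (hsub : ∀ H ∈ ℋ, g H ⊆ H) (hne : ∀ H ∈ ℋ, (g H).Nonempty) :
    IsBlockFamily (ℋ.image g) := by
  refine ⟨by simpa using hne, ?_⟩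
  simp only [coe_image]
  rintro _ ⟨H, hH, rfl⟩ _ ⟨H', hH', rfl⟩ hne
  exact (h.comparable hH hH' (ne_of_apply_ne g hne)).imp
    (fun hlt => finLT.mono hlt (hsub H hH) (hsub H' hH'))
    (fun hlt => finLT.mono hlt (hsub H' hH') (hsub H hH))

lemma IsBlockFamily.biUnion {ℋ : Finset (Finset ℕ)} {𝓕 : Finset ℕ → Finset (Finset ℕ)}
    (h : IsBlockFamily ℋ) (h𝓕 : ∀ H ∈ ℋ, IsBlockFamily (𝓕 H))
    (hsub : ∀ H ∈ ℋ, ∀ F ∈ 𝓕 H, F ⊆ H) : IsBlockFamily (ℋ.biUnion 𝓕) := by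
  refine ⟨fun F hF => ?_, fun F hF F' hF' hne => ?_⟩
  · obtain ⟨H, hH, hF⟩ := mem_biUnion.1 hF
    exact (h𝓕 H hH).nonempty F hF
  obtain ⟨H, hH, hF⟩ := mem_biUnion.1 hF
  obtain ⟨H', hH', hF'⟩ := mem_biUnion.1 hF'
  by_cases hHH' : H = H'
  · subst hHH'
    exact (h𝓕 H hH).comparable hF hF' hne
  · exact (h.comparable hH hH' hHH').imp
      (fun hlt => finLT.mono hlt (hsub H hH F hF) (hsub H' hH' F' hF'))
      (fun hlt => finLT.mono hlt (hsub H' hH' F' hF') (hsub H hH F hF))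

lemma famComp_assoc_subset {M N P : Set (Finset ℕ)} :
    famComp (famComp M N) P ⊆ famComp M (famComp N P) := by
  intro A hA
  obtain ⟨𝓕, h𝓕, hP, hB, rfl⟩ := mem_famComp_iff.1 hA
  obtain ⟨𝒢, h𝒢, hN, hM, hB⟩ := mem_famComp_iff.1 hB
  have hsub : ∀ G ∈ 𝒢, G ⊆ 𝓕.image sMin := fun G hG => hB ▸ subset_biUnion_of_mem id hG
  refine mem_famComp_iff.2 ⟨𝒢.image (blockUnion 𝓕), ⟨?_, ?_⟩, ?_, ?_, ?_⟩
  · simpa using fun G hG => blockUnion_nonempty h𝓕 (hsub G hG) (h𝒢.nonempty G hG)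
  · simp only [coe_image]
    rintro _ ⟨G, hG, rfl⟩ _ ⟨G', hG', rfl⟩ hne
    exact (h𝒢.comparable hG hG' (ne_of_apply_ne _ hne)).imp
      (finLT_blockUnion h𝓕) (finLT_blockUnion h𝓕)
  · simpa using fun G hG => blockUnion_mem_famComp h𝓕 hP (hsub G hG) (hN G hG)
  · rwa [image_image, image_congr (f := sMin ∘ blockUnion 𝓕) fun G hG =>
      sMin_blockUnion h𝓕 (hsub G hG)]
  · rw [image_biUnion]
    simp only [id_eq]
    rw [biUnion_blockUnion, ← hB, blockUnion_image_sMin]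

lemma famComp_assoc_superset {M N P : Set (Finset ℕ)} :
    famComp M (famComp N P) ⊆ famComp (famComp M N) P := by
  intro A hA
  obtain ⟨ℋ, hℋ, hH, hM, rfl⟩ := mem_famComp_iff.1 hA
  have : ∀ H, ∃ 𝓕 : Finset (Finset ℕ), H ∈ ℋ → IsBlockFamily 𝓕 ∧ (∀ F ∈ 𝓕, F ∈ P) ∧
      𝓕.image sMin ∈ N ∧ H = 𝓕.biUnion id := fun H => by
    by_cases hH' : H ∈ ℋ
    · exact (mem_famComp_iff.1 (hH H hH')).imp fun _ h _ => h
    · exact ⟨∅, fun h => absurd h hH'⟩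
  choose 𝓕 h𝓕 using this
  have hsub : ∀ H ∈ ℋ, ∀ F ∈ 𝓕 H, F ⊆ H := fun H hH F hF =>
    (h𝓕 H hH).2.2.2 ▸ subset_biUnion_of_mem id hF
  have hmins : ∀ H ∈ ℋ, sMin ((𝓕 H).image sMin) = sMin H := fun H hH => by
    conv_rhs => rw [(h𝓕 H hH).2.2.2]
    exact ((h𝓕 H hH).1.sMin_biUnion).symm
  refine mem_famComp_iff.2 ⟨ℋ.biUnion 𝓕, hℋ.biUnion (fun H hH => (h𝓕 H hH).1) hsub,
    fun F hF => ?_, ?_, ?_⟩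
  · obtain ⟨H, hH, hF⟩ := mem_biUnion.1 hF
    exact (h𝓕 H hH).2.1 F hF
  · rw [biUnion_image]
    refine mem_famComp_iff.2 ⟨ℋ.image fun H => (𝓕 H).image sMin, ?_, ?_, ?_, ?_⟩
    · refine hℋ.image (fun H hH => ?_) (fun H hH => ?_)
      · intro m hm
        obtain ⟨F, hF, rfl⟩ := mem_image.1 hm
        exact hsub H hH F hF (sMin_mem ((h𝓕 H hH).1.nonempty F hF))
      · obtain ⟨a, ha⟩ := hℋ.nonempty H hH
        rw [(h𝓕 H hH).2.2.2, mem_biUnion] at ha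
        obtain ⟨F, hF, -⟩ := ha
        exact ⟨sMin F, mem_image_of_mem sMin hF⟩
    · simpa using fun H hH => (h𝓕 H hH).2.2.1
    · rwa [image_image, image_congr (f := sMin ∘ fun H => (𝓕 H).image sMin) hmins]
    · rw [image_biUnion]; rfl
  · rw [biUnion_biUnion]
    exact biUnion_congr rfl fun H hH => (h𝓕 H hH).2.2.2

theorem famComp_assoc (M N P : Set (Finset ℕ)) :
    famComp (famComp M N) P = famComp M (famComp N P) :=
  famComp_assoc_subset.antisymm famComp_assoc_superset

lemma exists_card_le_of_mem_famComp_Acard {M : Set (Finset ℕ)} {l : ℕ} {A : Finset ℕ}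
    (hA : A ∈ famComp M (Acard l)) :
    ∃ C ∈ M, #A ≤ #C * l ∧ ∀ n, finLE n C → finLE n A := by
  obtain ⟨𝓕, h𝓕, hl, hM, rfl⟩ := mem_famComp_iff.1 hA
  refine ⟨_, hM, ?_, fun n => finLE_biUnion_of_finLE_image_sMin⟩
  rw [h𝓕.card_image_sMin]
  exact card_biUnion_le_card_mul _ _ _ hl

lemma Acard_mono {k l : ℕ} (h : k ≤ l) : Acard k ⊆ Acard l :=
  fun _ hE => (show _ ≤ k from hE).trans h

theorem famComp_Acard_subset {k l : ℕ} : famComp (Acard k) (Acard l) ⊆ Acard (k * l) := by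
  intro A hA
  obtain ⟨C, hk, hA, -⟩ := exists_card_le_of_mem_famComp_Acard hA
  exact hA.trans (Nat.mul_le_mul_right l hk)

lemma subset_famComp_of_singleton_mem {M N : Set (Finset ℕ)} (hN : ∀ a, {a} ∈ N) :
    M ⊆ famComp M N := by
  intro X hX
  refine mem_famComp_iff.2 ⟨X.image singleton, ⟨?_, ?_⟩, by simpa using fun a _ => hN a, ?_, ?_⟩
  · simp
  · simp only [coe_image]
    rintro _ ⟨a, -, rfl⟩ _ ⟨b, -, rfl⟩ hab
    rcases lt_or_gt_of_ne (ne_of_apply_ne singleton hab) with h | h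
    · exact Or.inl (by simpa [finLT] using h)
    · exact Or.inr (by simpa [finLT] using h)
  · rwa [image_image, image_congr (f := sMin ∘ singleton) (g := id) fun a _ => sMin_singleton a,
      image_id]
  · rw [image_biUnion]
    exact biUnion_singleton_eq_self.symm

def schreierSets : Set (Finset ℕ) := {A | finLE #A A}

lemma mem_schreierSets_of_finLE {n : ℕ} {A : Finset ℕ} (h : finLE n A) (hn : #A ≤ n) :
    A ∈ schreierSets :=
  fun a ha => hn.trans (h a ha)

theorem succStep_eq_famComp (F : Set (Finset ℕ)) : succStep F = famComp schreierSets F := by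
  have hinj : ∀ {k} (E : Fin k → Finset ℕ), (∀ i, (E i).Nonempty) →
      (∀ i j, i < j → finLT (E i) (E j)) → #(univ.image fun i => sMin (E i)) = k := by
    intro k E hne hlt
    rw [card_image_of_injective _ fun i j hij => ?_, card_fin]
    by_contra hne'
    rcases lt_or_gt_of_ne hne' with h | h
    · exact (finLT.sMin_lt (hlt i j h) (hne i) (hne j)).ne hij
    · exact (finLT.sMin_lt (hlt j i h) (hne j) (hne i)).ne hij.symm
  ext A
  constructor
  · rintro ⟨n, E, hF, hne, hlt, hle, rfl⟩
    refine ⟨n, E, hF, hne, hlt, ?_, rfl⟩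
    rw [schreierSets, Set.mem_ofPred_eq, hinj E hne hlt]
    simpa [finLE] using fun i => hle i _ (sMin_mem (hne i))
  · rintro ⟨k, E, hF, hne, hlt, hM, rfl⟩
    refine ⟨k, E, hF, hne, hlt, fun i a ha => ?_, rfl⟩
    rw [schreierSets, Set.mem_ofPred_eq, hinj E hne hlt] at hM
    exact (hM _ (mem_image_of_mem _ (mem_univ i))).trans (sMin_le ha)

lemma finLT.disjoint {A B : Finset ℕ} (h : finLT A B) : Disjoint A B :=
  disjoint_left.2 fun a ha haB => lt_irrefl a (h a ha a haB)

lemma exists_finLT_split {A : Finset ℕ} {k : ℕ} (hk : k ≤ #A) :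
    ∃ Y Z, finLT Y Z ∧ #Y = k ∧ Y ∪ Z = A := by
  induction k with
  | zero => exact ⟨∅, A, fun _ h => absurd h (notMem_empty _), card_empty, empty_union A⟩
  | succ k ih =>
    obtain ⟨Y, Z, hYZ, hY, rfl⟩ := ih (Nat.le_of_succ_le hk)
    have hZ : Z.Nonempty := by
      rw [← card_pos]
      have := card_union_le Y Z
      omega
    refine ⟨insert (sMin Z) Y, Z.erase (sMin Z), ?_, ?_, ?_⟩
    · intro a ha b hb
      rcases mem_insert.1 ha with rfl | ha
      · exact (sMin_le (mem_of_mem_erase hb)).lt_of_ne (ne_of_mem_erase hb).symm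
      · exact hYZ a ha b (mem_of_mem_erase hb)
    · rw [card_insert_of_notMem fun h => lt_irrefl _ (hYZ _ h _ (sMin_mem hZ)), hY]
    · rw [insert_union, ← union_insert, insert_erase (sMin_mem hZ)]

lemma union_mem_famComp_Acard_three {M : Set (Finset ℕ)} {X Y Z : Finset ℕ}
    (hX : X ∈ M) (hY : Y ∈ M) (hZ : Z ∈ M) (hXY : finLT X Y) (hYZ : finLT Y Z)
    (hXZ : finLT X Z) : X ∪ Y ∪ Z ∈ famComp (Acard 3) M := by
  set l := [X, Y, Z].filter fun F => F.Nonempty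
  have hl : l.Pairwise finLT := List.Pairwise.filter _ (by simp [hXY, hYZ, hXZ])
  have hsub : ∀ F ∈ l, F ∈ [X, Y, Z] ∧ F.Nonempty := fun F hF => by
    simpa using List.mem_filter.1 hF
  refine mem_famComp_iff.2 ⟨l.toFinset, isBlockFamily_toFinset hl fun F hF => (hsub F hF).2,
    fun F hF => ?_, ?_, ?_⟩
  · rcases (hsub F (List.mem_toFinset.1 hF)).1 with _ | ⟨_, _ | ⟨_, _ | ⟨_, h⟩⟩⟩
    exacts [hX, hY, hZ, absurd h List.not_mem_nil]
  · exact card_image_le.trans <| (List.toFinset_card_le _).trans <|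
      (List.length_filter_le _ _).trans (by simp)
  · ext a
    simp only [l, mem_union, mem_biUnion, List.mem_toFinset, List.mem_filter, id]
    grind

theorem mem_famComp_Acard_three_schreierSets {m : ℕ} {A : Finset ℕ} (hA : finLE m A)
    (hcard : #A ≤ 6 * m) : A ∈ famComp (Acard 3) schreierSets := by
  -- cut `A` after `m` and `3m` elements: the pieces lie above `m`, `2m`, `4m` and have at most
  -- `m`, `2m`, `3m` elements
  obtain ⟨X, YZ, hXYZ, hX, rfl⟩ := exists_finLT_split (min_le_right m #A)
  obtain ⟨Y, Z, hYZ, hY, rfl⟩ := exists_finLT_split (min_le_right (2 * m) #YZ)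
  have hXY : finLT X Y := finLT.mono hXYZ subset_rfl subset_union_left
  have hXZ : finLT X Z := finLT.mono hXYZ subset_rfl subset_union_right
  have hcardXYZ := card_union_of_disjoint (finLT.disjoint hXYZ)
  have hcardYZ := card_union_of_disjoint (finLT.disjoint hYZ)
  have hcardXY := card_union_of_disjoint (finLT.disjoint hXY)
  have hmX : finLE m X := fun a ha => hA a (by simp [ha])
  have hmY : finLE m Y := fun a ha => hA a (by simp [ha])
  have hmZ : finLE m Z := fun a ha => hA a (by simp [ha])
  have hY' := finLE_add_card_of_finLT hmX hmY hXY
  have hmXY : finLE m (X ∪ Y) := fun a ha => hA a (union_assoc X Y Z ▸ mem_union_left Z ha)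
  have hZ' := finLE_add_card_of_finLT hmXY hmZ fun a ha b hb =>
    (mem_union.1 ha).elim (hXZ a · b hb) (hYZ a · b hb)
  rw [← union_assoc]
  exact union_mem_famComp_Acard_three (mem_schreierSets_of_finLE hmX (by omega))
    (mem_schreierSets_of_finLE hY' (by omega)) (mem_schreierSets_of_finLE hZ' (by omega))
    hXY hYZ hXZ

theorem famComp_schreierSets_Acard_six_subset :
    famComp schreierSets (Acard 6) ⊆ famComp (Acard 3) schreierSets := by
  intro A hA
  obtain ⟨C, hC, hcard, hle⟩ := exists_card_le_of_mem_famComp_Acard hA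
  exact mem_famComp_Acard_three_schreierSets (hle _ hC) (by rw [mul_comm]; exact hcard)

theorem famComp_famComp_schreierSets_Acard_six_subset {F : Set (Finset ℕ)}
    (hF : famComp F (Acard 6) ⊆ famComp (Acard 6) F) :
    famComp (famComp schreierSets F) (Acard 6) ⊆ famComp (Acard 3) (famComp schreierSets F) :=
  calc famComp (famComp schreierSets F) (Acard 6)
      _ ⊆ famComp schreierSets (famComp F (Acard 6)) := (famComp_assoc _ _ _).subset
      _ ⊆ famComp schreierSets (famComp (Acard 6) F) := famComp_mono_right hF
      _ ⊆ famComp (famComp schreierSets (Acard 6)) F := (famComp_assoc _ _ _).superset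
      _ ⊆ famComp (famComp (Acard 3) schreierSets) F :=
        famComp_mono_left famComp_schreierSets_Acard_six_subset
      _ ⊆ famComp (Acard 3) (famComp schreierSets F) := (famComp_assoc _ _ _).subset

theorem famComp_Acard_three_subset_famThree {M : Set (Finset ℕ)} (hempty : ∅ ∈ M) :
    famComp (Acard 3) M ⊆ famThree M := by
  intro A hA
  obtain ⟨𝓕, h𝓕, hM, h3, rfl⟩ := mem_famComp_iff.1 hA
  obtain ⟨l, hl, rfl⟩ := h𝓕.exists_sorted_list
  have hnodup : l.Nodup := hl.imp_of_mem fun hF _ hFG h => by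
    subst h
    exact lt_irrefl _ (finLT.sMin_lt hFG (h𝓕.nonempty _ (List.mem_toFinset.2 hF))
      (h𝓕.nonempty _ (List.mem_toFinset.2 hF)))
  have hlen : l.length ≤ 3 := by
    rwa [Acard, Set.mem_ofPred_eq, h𝓕.card_image_sMin, List.toFinset_card_of_nodup hnodup] at h3
  have hlM : ∀ F ∈ l, F ∈ M := fun F hF => hM F (List.mem_toFinset.2 hF)
  have hbot : ∀ F, finLT F ∅ ∧ finLT ∅ F := fun F => ⟨by simp [finLT], by simp [finLT]⟩
  rcases l with _ | ⟨X, _ | ⟨Y, _ | ⟨Z, _ | ⟨W, l⟩⟩⟩⟩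
  · exact ⟨∅, ∅, ∅, hempty, hempty, hempty, (hbot _).1, (hbot _).1, by simp⟩
  · exact ⟨X, ∅, ∅, by simp_all, hempty, hempty, (hbot _).1, (hbot _).1, by simp⟩
  · exact ⟨X, Y, ∅, by simp_all, by simp_all, hempty, by simp_all, (hbot _).1, by simp⟩
  · refine ⟨X, Y, Z, by simp_all, by simp_all, by simp_all, by simp_all, by simp_all, ?_⟩
    ext
    simp
  · simp at hlen
    omega

end Schreier

open Schreier

namespace SchreierSystem

variable (𝒮 : SchreierSystem)

lemma empty_mem_S {ξ : Ordinal} (hξ : ξ < omegaOne) : ∅ ∈ 𝒮.S ξ := by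
  have hsucc : ∀ γ, ∅ ∈ 𝒮.S (γ + 1) := fun γ => by
    rw [𝒮.S_succ]
    exact ⟨0, Fin.elim0, by simp, by simp, by simp, by simp, by simp⟩
  rcases Ordinal.zero_or_succ_or_isSuccLimit ξ with rfl | ⟨γ, rfl⟩ | hlim
  · rw [𝒮.S_zero]
    exact Or.inl rfl
  · rw [Order.succ_eq_add_one]
    exact hsucc γ
  · rw [𝒮.S_limit ξ hlim hξ]
    obtain ⟨β, hβ⟩ := 𝒮.α_succOrd ξ hlim hξ 1 le_rfl
    exact ⟨1, le_rfl, by simp [finLE], hβ ▸ hsucc β⟩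

lemma singleton_mem_S_zero (a : ℕ) : {a} ∈ 𝒮.S 0 := by
  rw [𝒮.S_zero]
  exact Or.inr ⟨a, rfl⟩

lemma S_zero_subset_Acard_one : 𝒮.S 0 ⊆ Acard 1 := by
  rw [𝒮.S_zero]
  rintro _ (rfl | ⟨a, rfl⟩) <;> simp [Acard]

lemma famComp_S_zero_Acard_six_subset :
    famComp (𝒮.S 0) (Acard 6) ⊆ famComp (Acard 6) (𝒮.S 0) :=
  (famComp_mono_left 𝒮.S_zero_subset_Acard_one).trans <|
    (famComp_Acard_subset (k := 1) (l := 6)).trans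
      (subset_famComp_of_singleton_mem 𝒮.singleton_mem_S_zero)

lemma famComp_S_limit_Acard_six_subset {ξ : Ordinal} (hlim : Order.IsSuccLimit ξ)
    (hξ : ξ < omegaOne) (ih : ∀ n, 1 ≤ n →
      famComp (𝒮.S (𝒮.α ξ n)) (Acard 6) ⊆ famComp (Acard 3) (𝒮.S (𝒮.α ξ n))) :
    famComp (𝒮.S ξ) (Acard 6) ⊆ famComp (Acard 3) (𝒮.S ξ) := by
  intro A hA
  obtain ⟨𝓕, h𝓕, h6, hC, rfl⟩ := mem_famComp_iff.1 hA
  rw [𝒮.S_limit ξ hlim hξ] at hC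
  obtain ⟨n, hn, hnC, hC⟩ := hC
  have hnA := finLE_biUnion_of_finLE_image_sMin hnC
  refine mem_famComp_of_forall_subset (ih n hn (mem_famComp_iff.2 ⟨𝓕, h𝓕, h6, hC, rfl⟩))
    fun E hE hEA => ?_
  rw [𝒮.S_limit ξ hlim hξ]
  exact ⟨n, hn, fun a ha => hnA a (hEA ha), hE⟩

theorem famComp_S_Acard_six_subset {ξ : Ordinal} (h1 : 1 ≤ ξ) (hξ : ξ < omegaOne) :
    famComp (𝒮.S ξ) (Acard 6) ⊆ famComp (Acard 3) (𝒮.S ξ) := by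
  induction ξ using WellFoundedLT.induction with
  | _ ξ ih =>
  rcases Ordinal.zero_or_succ_or_isSuccLimit ξ with rfl | ⟨γ, rfl⟩ | hlim
  · exact absurd h1 (not_le.2 zero_lt_one)
  · rw [Order.succ_eq_add_one] at ih hξ ⊢
    rw [𝒮.S_succ, succStep_eq_famComp]
    refine famComp_famComp_schreierSets_Acard_six_subset ?_
    rcases eq_or_ne γ 0 with rfl | hγ
    · exact 𝒮.famComp_S_zero_Acard_six_subset
    · have hγξ : γ < γ + 1 := Order.lt_add_one_iff.2 le_rfl
      exact (ih γ hγξ (Order.one_le_iff_ne_zero.2 hγ) (hγξ.trans hξ)).trans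
        (famComp_mono_left (Acard_mono (by norm_num)))
  · exact 𝒮.famComp_S_limit_Acard_six_subset hlim hξ fun n hn =>
      ih _ (𝒮.α_lt ξ hlim hξ n hn) (𝒮.α_pos ξ hlim hξ n hn) ((𝒮.α_lt ξ hlim hξ n hn).trans hξ)

end SchreierSystem

/-- For every ordinal `1 ≤ ξ < ω₁`: `(S_ξ[A_2])[A_3] ⊆ (S_ξ)³`. -/
theorem comp_A2_A3_subset (𝒮 : SchreierSystem) (ξ : Ordinal) (h1 : 1 ≤ ξ)
    (hξ : ξ < omegaOne) :
    famComp (famComp (𝒮.S ξ) (Acard 2)) (Acard 3) ⊆ famThree (𝒮.S ξ) :=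
  calc famComp (famComp (𝒮.S ξ) (Acard 2)) (Acard 3)
      _ ⊆ famComp (𝒮.S ξ) (famComp (Acard 2) (Acard 3)) := (famComp_assoc _ _ _).subset
      _ ⊆ famComp (𝒮.S ξ) (Acard 6) := famComp_mono_right famComp_Acard_subset
      _ ⊆ famComp (Acard 3) (𝒮.S ξ) := 𝒮.famComp_S_Acard_six_subset h1 hξ
      _ ⊆ famThree (𝒮.S ξ) := famComp_Acard_three_subset_famThree (𝒮.empty_mem_S hξ)
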